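/- arXiv:2505.08609 — 2 statements merged into one kernel-verified Lean document; each statement's English description precedes it below -/
import Mathlib

section
/- Let D² be a degeneracy subset of X and suppose Y ∈ BCon(X) is such that both Y and Y^c are minimal elements of D². Let D¹ be the degeneracy subset generated by D²_min − {Y, Y^c} (i.e. whose minimal elements are those of D² except Y and Y^c). Then D¹ ≥ D² in the poset of degeneracy subsets, witnessed by E := {Z ∈ D² − D¹ : Y ⊆ Z}. -/
open Finset

variable {ι : Type*} [Fintype ι] [DecidableEq ι]

/-- A subcurve `Y` of the curve (modeled by its finite set of irreducible components with a
connectivity predicate `conn`) is *biconnected* if both `Y` and its complement are nonempty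
and connected. -/
def BCon (conn : Finset ι → Prop) (Y : Finset ι) : Prop :=
  Y.Nonempty ∧ Yᶜ.Nonempty ∧ conn Y ∧ conn Yᶜ

/-- `Y` is `s`-degenerate (for characteristic `χ`): `s Y + s Yᶜ - χ = 0`. -/
def Degen (s : Finset ι → ℤ) (χ : ℤ) (Y : Finset ι) : Prop :=
  s Y + s Yᶜ = χ

/-- A V-stability condition of characteristic `χ`. -/
structure IsVStab (conn : Finset ι → Prop) (χ : ℤ) (s : Finset ι → ℤ) : Prop where
  cond1 : ∀ Y : Finset ι, BCon conn Y → s Y + s Yᶜ = χ ∨ s Y + s Yᶜ = χ + 1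
  cond2a : ∀ Y₁ Y₂ Y₃ : Finset ι, BCon conn Y₁ → BCon conn Y₂ → BCon conn Y₃ →
    Disjoint Y₁ Y₂ → Disjoint Y₁ Y₃ → Disjoint Y₂ Y₃ → Y₁ ∪ Y₂ ∪ Y₃ = univ →
    Degen s χ Y₁ → Degen s χ Y₂ → Degen s χ Y₃
  cond2b : ∀ Y₁ Y₂ Y₃ : Finset ι, BCon conn Y₁ → BCon conn Y₂ → BCon conn Y₃ →
    Disjoint Y₁ Y₂ → Disjoint Y₁ Y₃ → Disjoint Y₂ Y₃ → Y₁ ∪ Y₂ ∪ Y₃ = univ →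
    (¬ Degen s χ Y₁ ∧ ¬ Degen s χ Y₂ ∧ ¬ Degen s χ Y₃ →
      s Y₁ + s Y₂ + s Y₃ - χ = 1 ∨ s Y₁ + s Y₂ + s Y₃ - χ = 2) ∧
    (((Degen s χ Y₁ ∧ ¬ Degen s χ Y₂ ∧ ¬ Degen s χ Y₃) ∨
      (¬ Degen s χ Y₁ ∧ Degen s χ Y₂ ∧ ¬ Degen s χ Y₃) ∨
      (¬ Degen s χ Y₁ ∧ ¬ Degen s χ Y₂ ∧ Degen s χ Y₃)) →
      s Y₁ + s Y₂ + s Y₃ - χ = 1) ∧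
    (Degen s χ Y₁ ∧ Degen s χ Y₂ ∧ Degen s χ Y₃ → s Y₁ + s Y₂ + s Y₃ - χ = 0)

/-- A degeneracy subset of the curve. -/
def IsDegSet (conn : Finset ι → Prop) (D : Set (Finset ι)) : Prop :=
  (∀ Y ∈ D, BCon conn Y) ∧ (∀ Y ∈ D, Yᶜ ∈ D) ∧
  (∀ Y₁ ∈ D, ∀ Y₂ ∈ D, Disjoint Y₁ Y₂ → BCon conn (Y₁ ∪ Y₂) → Y₁ ∪ Y₂ ∈ D)

/-- The partial order on degeneracy subsets: `DegGE D₁ D₂` means `D₁ ≥ D₂`. -/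
def DegGE (conn : Finset ι → Prop) (D₁ D₂ : Set (Finset ι)) : Prop :=
  D₁ ⊆ D₂ ∧ ∃ E : Set (Finset ι), E ⊆ D₂ \ D₁ ∧
    (∀ Z ∈ D₂ \ D₁, Z ∈ E ↔ Zᶜ ∉ E) ∧
    (∀ Z₁ ∈ D₂ \ D₁, ∀ Z₂ ∈ D₂ \ D₁, Disjoint Z₁ Z₂ → Z₁ ∪ Z₂ ∈ D₁ → (Z₁ ∈ E ↔ Z₂ ∉ E)) ∧
    (∀ Z₁ ∈ D₂ \ D₁, ∀ Z₂ ∈ D₂ \ D₁, ∀ Z₃ ∈ D₂ \ D₁,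
      Disjoint Z₁ Z₂ → Disjoint Z₁ Z₃ → Disjoint Z₂ Z₃ → Z₁ ∪ Z₂ ∪ Z₃ = univ →
      (Z₁ ∈ E ∨ Z₂ ∈ E ∨ Z₃ ∈ E) ∧ ¬ (Z₁ ∈ E ∧ Z₂ ∈ E ∧ Z₃ ∈ E))

/-- The minimal elements of a degeneracy subset. -/
def Dmin (conn : Finset ι → Prop) (D : Set (Finset ι)) : Set (Finset ι) :=
  {Y | Y ∈ D ∧ ¬ ∃ W ∈ D, W ⊂ Y ∧ BCon conn (Y \ W)}

/-- The degeneracy subset generated by a family of biconnected subcurves. -/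
def degGen (conn : Finset ι → Prop) (S : Set (Finset ι)) : Set (Finset ι) :=
  ⋂₀ {D | IsDegSet conn D ∧ S ⊆ D}

lemma bcon_compl {conn : Finset ι → Prop} {Z : Finset ι} (h : BCon conn Z) :
    BCon conn Zᶜ := ⟨h.2.1, by rw [compl_compl]; exact h.1, h.2.2.2, by rw [compl_compl]; exact h.2.2.1⟩

lemma sdiff_mem {conn : Finset ι → Prop} {D : Set (Finset ι)} (hD : IsDegSet conn D)
    {Z W : Finset ι} (hZ : Z ∈ D) (hW : W ∈ D) (hWZ : W ⊆ Z) (hB : BCon conn (Z \ W)) :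
    Z \ W ∈ D := by
  have hZc : Zᶜ ∈ D := hD.2.1 Z hZ
  have hdis : Disjoint Zᶜ W := by
    rw [Finset.disjoint_left]; intro a ha haW
    exact (Finset.mem_compl.mp ha) (hWZ haW)
  have he : Zᶜ ∪ W = (Z \ W)ᶜ := by
    ext a; simp only [Finset.mem_union, Finset.mem_compl, Finset.mem_sdiff]; tauto
  have hu : Zᶜ ∪ W ∈ D := hD.2.2 _ hZc _ hW hdis (by rw [he]; exact bcon_compl hB)
  have := hD.2.1 _ hu
  rwa [he, compl_compl] at this

lemma key_ne {conn : Finset ι → Prop} {D : Set (Finset ι)} (hD : IsDegSet conn D)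
    {T Z W : Finset ι} (hT : T ∈ Dmin conn D) (hZ : Z ∈ D) (hW : W ∈ D)
    (hWZ : W ⊂ Z) (hB : BCon conn (Z \ W)) : W ≠ Tᶜ := by
  rintro rfl
  have hTcZ : Tᶜ ⊆ Z := hWZ.subset
  have hVD : Z \ Tᶜ ∈ D := sdiff_mem hD hZ hW hTcZ hB
  have hVT : Z \ Tᶜ ⊆ T := by
    intro a ha
    have := (Finset.mem_sdiff.mp ha).2
    simpa [Finset.mem_compl] using this
  have hZuniv : Z ≠ univ := by
    intro h
    have := (hD.1 Z hZ).2.1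
    rw [h, Finset.compl_univ] at this
    exact Finset.not_nonempty_empty this
  have hVne : Z \ Tᶜ ≠ T := by
    intro h
    have hTZ : T ⊆ Z := h ▸ Finset.sdiff_subset
    apply hZuniv
    apply Finset.eq_univ_of_forall
    intro a
    by_cases haT : a ∈ T
    · exact hTZ haT
    · exact hTcZ (Finset.mem_compl.mpr haT)
  have hTV : T \ (Z \ Tᶜ) = Zᶜ := by
    ext a
    constructor
    · intro ha
      have haT := (Finset.mem_sdiff.mp ha).1
      have hna := (Finset.mem_sdiff.mp ha).2
      rw [Finset.mem_compl]
      intro haZ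
      exact hna (Finset.mem_sdiff.mpr ⟨haZ, fun h => (Finset.mem_compl.mp h) haT⟩)
    · intro ha
      have haZ : a ∉ Z := Finset.mem_compl.mp ha
      have haT : a ∈ T := by
        by_contra h
        exact haZ (hTcZ (Finset.mem_compl.mpr h))
      exact Finset.mem_sdiff.mpr ⟨haT, fun h => haZ (Finset.mem_sdiff.mp h).1⟩
  exact hT.2 ⟨Z \ Tᶜ, hVD, ssubset_of_subset_of_ne hVT hVne,
    by rw [hTV]; exact bcon_compl (hD.1 Z hZ)⟩

lemma degGen_subset {conn : Finset ι → Prop} {D : Set (Finset ι)} (hD : IsDegSet conn D)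
    {S : Set (Finset ι)} (hS : S ⊆ D) : degGen conn S ⊆ D :=
  Set.sInter_subset_of_mem ⟨hD, hS⟩

lemma subset_degGen {conn : Finset ι → Prop} {S : Set (Finset ι)} : S ⊆ degGen conn S :=
  fun _ hZ => Set.mem_sInter.mpr fun _ hD => hD.2 hZ

lemma degGen_isDegSet {conn : Finset ι → Prop} {D : Set (Finset ι)} (hD : IsDegSet conn D)
    {S : Set (Finset ι)} (hS : S ⊆ D) : IsDegSet conn (degGen conn S) := by
  refine ⟨fun Z hZ => hD.1 Z (degGen_subset hD hS hZ),
    fun Z hZ => Set.mem_sInter.mpr fun E hE => hE.1.2.1 Z (Set.mem_sInter.mp hZ E hE),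
    fun Z₁ h₁ Z₂ h₂ hdis hB => Set.mem_sInter.mpr fun E hE =>
      hE.1.2.2 Z₁ (Set.mem_sInter.mp h₁ E hE) Z₂ (Set.mem_sInter.mp h₂ E hE) hdis hB⟩

lemma main_gen {conn : Finset ι → Prop} {D₂ : Set (Finset ι)} (hD2 : IsDegSet conn D₂)
    {Y : Finset ι} (hY : Y ∈ Dmin conn D₂) (hYc : Yᶜ ∈ Dmin conn D₂) :
    ∀ Z ∈ D₂, Z ≠ Y → Z ≠ Yᶜ → Z ∈ degGen conn (Dmin conn D₂ \ {Y, Yᶜ}) := by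
  set S : Set (Finset ι) := Dmin conn D₂ \ {Y, Yᶜ} with hSdef
  have hSD : S ⊆ D₂ := fun Z hZ => hZ.1.1
  have H : ∀ n : ℕ, ∀ Z ∈ D₂, Z.card ≤ n → Z ≠ Y → Z ≠ Yᶜ → Z ∈ degGen conn S := by
    intro n
    induction n with
    | zero =>
      intro Z hZ hcard _ _
      obtain ⟨a, ha⟩ := (hD2.1 Z hZ).1
      have : 0 < Z.card := Finset.card_pos.mpr ⟨a, ha⟩
      omega
    | succ n ih =>
      intro Z hZ hcard hne1 hne2
      by_cases hmin : Z ∈ Dmin conn D₂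
      · exact subset_degGen ⟨hmin, by simp [hne1, hne2]⟩
      · have hex : ∃ W ∈ D₂, W ⊂ Z ∧ BCon conn (Z \ W) := by
          by_contra h
          exact hmin ⟨hZ, h⟩
        obtain ⟨W, hW, hWZ, hB⟩ := hex
        have hVD : Z \ W ∈ D₂ := sdiff_mem hD2 hZ hW hWZ.subset hB
        have hWne1 : W ≠ Y := by
          have := key_ne hD2 hYc hZ hW hWZ hB
          rwa [compl_compl] at this
        have hWne2 : W ≠ Yᶜ := key_ne hD2 hY hZ hW hWZ hB
        have hVZ : Z \ W ⊂ Z := by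
          refine Finset.sdiff_ssubset hWZ.subset (hD2.1 W hW).1
        have hBW : BCon conn (Z \ (Z \ W)) := by
          rw [Finset.sdiff_sdiff_eq_self hWZ.subset]
          exact hD2.1 W hW
        have hVne1 : Z \ W ≠ Y := by
          have := key_ne hD2 hYc hZ hVD hVZ hBW
          rwa [compl_compl] at this
        have hVne2 : Z \ W ≠ Yᶜ := key_ne hD2 hY hZ hVD hVZ hBW
        have hWcard : W.card ≤ n := by
          have := Finset.card_lt_card hWZ
          omega
        have hVcard : (Z \ W).card ≤ n := by
          have := Finset.card_lt_card hVZ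
          omega
        have hWg := ih W hW hWcard hWne1 hWne2
        have hVg := ih (Z \ W) hVD hVcard hVne1 hVne2
        have hdis : Disjoint W (Z \ W) := Finset.disjoint_sdiff
        have hU : W ∪ (Z \ W) = Z := Finset.union_sdiff_of_subset hWZ.subset
        have := (degGen_isDegSet hD2 hSD).2.2 W hWg (Z \ W) hVg hdis
          (by rw [hU]; exact hD2.1 Z hZ)
        rwa [hU] at this
  intro Z hZ h1 h2
  exact H Z.card Z hZ le_rfl h1 h2

/-- Move I: removing a complementary pair `{Y, Yᶜ}` of minimal elements from a degeneracy
subset `D₂` yields a degeneracy subset `D₁` with `D₁ ≥ D₂`, witnessed by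
`E = {Z ∈ D₂ − D₁ : Y ⊆ Z}`. -/
theorem stmt_15 (conn : Finset ι → Prop) (D₂ : Set (Finset ι)) (hD2 : IsDegSet conn D₂)
    (Y : Finset ι) (hY : Y ∈ Dmin conn D₂) (hYc : Yᶜ ∈ Dmin conn D₂) :
    (degGen conn (Dmin conn D₂ \ {Y, Yᶜ}) ⊆ D₂) ∧
    ({Z | Z ∈ D₂ \ degGen conn (Dmin conn D₂ \ {Y, Yᶜ}) ∧ Y ⊆ Z} ⊆
      D₂ \ degGen conn (Dmin conn D₂ \ {Y, Yᶜ})) ∧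
    (∀ Z ∈ D₂ \ degGen conn (Dmin conn D₂ \ {Y, Yᶜ}),
      Z ∈ {Z | Z ∈ D₂ \ degGen conn (Dmin conn D₂ \ {Y, Yᶜ}) ∧ Y ⊆ Z} ↔
      Zᶜ ∉ {Z | Z ∈ D₂ \ degGen conn (Dmin conn D₂ \ {Y, Yᶜ}) ∧ Y ⊆ Z}) ∧
    (∀ Z₁ ∈ D₂ \ degGen conn (Dmin conn D₂ \ {Y, Yᶜ}),
      ∀ Z₂ ∈ D₂ \ degGen conn (Dmin conn D₂ \ {Y, Yᶜ}),
      Disjoint Z₁ Z₂ → Z₁ ∪ Z₂ ∈ degGen conn (Dmin conn D₂ \ {Y, Yᶜ}) →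
      (Z₁ ∈ {Z | Z ∈ D₂ \ degGen conn (Dmin conn D₂ \ {Y, Yᶜ}) ∧ Y ⊆ Z} ↔
        Z₂ ∉ {Z | Z ∈ D₂ \ degGen conn (Dmin conn D₂ \ {Y, Yᶜ}) ∧ Y ⊆ Z})) ∧
    (∀ Z₁ ∈ D₂ \ degGen conn (Dmin conn D₂ \ {Y, Yᶜ}),
      ∀ Z₂ ∈ D₂ \ degGen conn (Dmin conn D₂ \ {Y, Yᶜ}),
      ∀ Z₃ ∈ D₂ \ degGen conn (Dmin conn D₂ \ {Y, Yᶜ}),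
      Disjoint Z₁ Z₂ → Disjoint Z₁ Z₃ → Disjoint Z₂ Z₃ → Z₁ ∪ Z₂ ∪ Z₃ = univ →
      (Z₁ ∈ {Z | Z ∈ D₂ \ degGen conn (Dmin conn D₂ \ {Y, Yᶜ}) ∧ Y ⊆ Z} ∨
        Z₂ ∈ {Z | Z ∈ D₂ \ degGen conn (Dmin conn D₂ \ {Y, Yᶜ}) ∧ Y ⊆ Z} ∨
        Z₃ ∈ {Z | Z ∈ D₂ \ degGen conn (Dmin conn D₂ \ {Y, Yᶜ}) ∧ Y ⊆ Z}) ∧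
      ¬ (Z₁ ∈ {Z | Z ∈ D₂ \ degGen conn (Dmin conn D₂ \ {Y, Yᶜ}) ∧ Y ⊆ Z} ∧
        Z₂ ∈ {Z | Z ∈ D₂ \ degGen conn (Dmin conn D₂ \ {Y, Yᶜ}) ∧ Y ⊆ Z} ∧
        Z₃ ∈ {Z | Z ∈ D₂ \ degGen conn (Dmin conn D₂ \ {Y, Yᶜ}) ∧ Y ⊆ Z})) ∧
    DegGE conn (degGen conn (Dmin conn D₂ \ {Y, Yᶜ})) D₂ := by
  set D₁ : Set (Finset ι) := degGen conn (Dmin conn D₂ \ {Y, Yᶜ}) with hD1def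
  set E : Set (Finset ι) := {Z | Z ∈ D₂ \ D₁ ∧ Y ⊆ Z} with hEdef
  have hSD : (Dmin conn D₂ \ {Y, Yᶜ} : Set (Finset ι)) ⊆ D₂ := fun Z hZ => hZ.1.1
  have hD1sub : D₁ ⊆ D₂ := degGen_subset hD2 hSD
  have hD1deg : IsDegSet conn D₁ := degGen_isDegSet hD2 hSD
  have hYB : BCon conn Y := hD2.1 Y hY.1
  have hYne : Y.Nonempty := hYB.1
  have hYcne : Yᶜ.Nonempty := hYB.2.1
  have hYnsub : ¬ Y ⊆ Yᶜ := by
    intro h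
    obtain ⟨y, hy⟩ := hYne
    exact (Finset.mem_compl.mp (h hy)) hy
  have hchar : ∀ Z ∈ D₂ \ D₁, Z = Y ∨ Z = Yᶜ := by
    intro Z hZ
    by_contra h
    push_neg at h
    exact hZ.2 (main_gen hD2 hY hYc Z hZ.1 h.1 h.2)
  have hc : ∀ {A : Finset ι}, A.Nonempty → ¬ Disjoint A A := by
    intro A hA hd
    rw [disjoint_self, Finset.bot_eq_empty] at hd
    exact Finset.nonempty_iff_ne_empty.mp hA hd
  have part2 : E ⊆ D₂ \ D₁ := fun Z hZ => hZ.1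
  have part3 : ∀ Z ∈ D₂ \ D₁, (Z ∈ E ↔ Zᶜ ∉ E) := by
    intro Z hZ
    rcases hchar Z hZ with rfl | rfl
    · constructor
      · intro _ hmem
        exact hYnsub hmem.2
      · intro _
        exact ⟨hZ, subset_rfl⟩
    · rw [compl_compl]
      have hYmem : Y ∈ E := by
        refine ⟨⟨hY.1, ?_⟩, subset_rfl⟩
        intro hYD1
        exact hZ.2 (hD1deg.2.1 Y hYD1)
      constructor
      · intro hmem
        exact absurd hmem.2 hYnsub
      · intro h
        exact absurd hYmem h
  have part4 : ∀ Z₁ ∈ D₂ \ D₁, ∀ Z₂ ∈ D₂ \ D₁, Disjoint Z₁ Z₂ → Z₁ ∪ Z₂ ∈ D₁ →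
      (Z₁ ∈ E ↔ Z₂ ∉ E) := by
    intro Z₁ h₁ Z₂ h₂ hdis hU
    have hunivn : ¬ (univ : Finset ι) ∈ D₂ := by
      intro h
      have := (hD2.1 _ h).2.1
      rw [Finset.compl_univ] at this
      exact Finset.not_nonempty_empty this
    rcases hchar Z₁ h₁ with rfl | rfl <;> rcases hchar Z₂ h₂ with rfl | rfl
    · exact absurd hdis (hc hYne)
    · exact absurd (hD1sub (by rwa [Finset.union_compl] at hU)) hunivn
    · exact absurd (hD1sub (by rwa [union_comm, Finset.union_compl] at hU)) hunivn
    · exact absurd hdis (hc hYcne)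
  have part5 : ∀ Z₁ ∈ D₂ \ D₁, ∀ Z₂ ∈ D₂ \ D₁, ∀ Z₃ ∈ D₂ \ D₁,
      Disjoint Z₁ Z₂ → Disjoint Z₁ Z₃ → Disjoint Z₂ Z₃ → Z₁ ∪ Z₂ ∪ Z₃ = univ →
      (Z₁ ∈ E ∨ Z₂ ∈ E ∨ Z₃ ∈ E) ∧ ¬ (Z₁ ∈ E ∧ Z₂ ∈ E ∧ Z₃ ∈ E) := by
    intro Z₁ h₁ Z₂ h₂ Z₃ h₃ h12 h13 h23 _
    rcases hchar Z₁ h₁ with rfl | rfl <;> rcases hchar Z₂ h₂ with rfl | rfl <;>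
      rcases hchar Z₃ h₃ with rfl | rfl <;>
      first
      | exact absurd h12 (hc hYne)
      | exact absurd h13 (hc hYne)
      | exact absurd h23 (hc hYne)
      | exact absurd h12 (hc hYcne)
      | exact absurd h13 (hc hYcne)
      | exact absurd h23 (hc hYcne)
  exact ⟨hD1sub, part2, part3, part4, part5, hD1sub, E, part2, part3, part4, part5⟩
end

section
/- A degeneracy subset D of X is a maximal element of the poset Deg(X) if and only if D = ∅; and D is submaximal (not maximal, and dominated only by the maximal element) if and only if D = {Y, Y^c} for some Y ∈ BCon(X). -/
open Finset

variable {ι : Type*} [Fintype ι] [DecidableEq ι]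

/-- `D` is a maximal element of the poset of degeneracy subsets. -/
def IsMaxDeg (conn : Finset ι → Prop) (D : Set (Finset ι)) : Prop :=
  IsDegSet conn D ∧ ∀ D' : Set (Finset ι), IsDegSet conn D' → DegGE conn D' D → D' = D

private lemma aux_exists_dir (Y Z : Finset ι) (hZe : Z ≠ ∅) (hZu : Z ≠ univ)
    (hZY : Z ≠ Y) (hZYc : Z ≠ Yᶜ) :
    ∃ u : ι → ℚ, ∑ i, u i = 0 ∧ ∑ i ∈ Y, u i = 0 ∧ ∑ i ∈ Z, u i ≠ 0 := by
  have key : ∃ a a', a ∈ Z ∧ a' ∉ Z ∧ (a ∈ Y ↔ a' ∈ Y) := by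
    by_cases hc : ∃ a ∈ Z, a ∈ Y
    · obtain ⟨a, haZ, haY⟩ := hc
      by_cases hd : ∃ a' ∈ Y, a' ∉ Z
      · obtain ⟨a', ha'Y, ha'Z⟩ := hd
        exact ⟨a, a', haZ, ha'Z, by simp [haY, ha'Y]⟩
      · push_neg at hd
        -- Y ⊆ Z
        have hb : ∃ b ∈ Z, b ∉ Y := by
          by_contra hb
          push_neg at hb
          exact hZY (Finset.Subset.antisymm hb hd)
        obtain ⟨b, hbZ, hbY⟩ := hb
        have hb' : ∃ b', b' ∉ Z := by
          by_contra hb'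
          push_neg at hb'
          exact hZu (Finset.eq_univ_of_forall hb')
        obtain ⟨b', hb'Z⟩ := hb'
        have hb'Y : b' ∉ Y := fun h => hb'Z (hd b' h)
        exact ⟨b, b', hbZ, hb'Z, by simp [hbY, hb'Y]⟩
    · push_neg at hc
      obtain ⟨a, haZ⟩ := Finset.nonempty_iff_ne_empty.2 hZe
      have haY := hc a haZ
      have hb' : ∃ b', b' ∉ Z ∧ b' ∉ Y := by
        by_contra hb'
        push_neg at hb'
        apply hZYc
        ext x
        simp only [Finset.mem_compl]
        exact ⟨fun hx => hc x hx, fun hx => by_contra fun hxZ => hx (hb' x hxZ)⟩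
      obtain ⟨b', hb'Z, hb'Y⟩ := hb'
      exact ⟨a, b', haZ, hb'Z, by simp [haY, hb'Y]⟩
  obtain ⟨a, a', haZ, ha'Z, hYY⟩ := key
  have hne : a ≠ a' := fun h => ha'Z (h ▸ haZ)
  refine ⟨fun i => (if i = a then 1 else 0) - (if i = a' then 1 else 0), ?_, ?_, ?_⟩
  · simp [Finset.sum_sub_distrib, Finset.sum_ite_eq']
  · simp only [Finset.sum_sub_distrib, Finset.sum_ite_eq']
    by_cases h : a ∈ Y
    · simp [h, hYY.1 h]
    · have h' : a' ∉ Y := fun hy => h (hYY.2 hy)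
      simp [h, h']
  · simp [Finset.sum_sub_distrib, Finset.sum_ite_eq', haZ, ha'Z]

private lemma aux_exists_w (Y : Finset ι) (B : Finset (Finset ι))
    (hB : ∀ Z ∈ B, Z ≠ ∅ ∧ Z ≠ univ ∧ Z ≠ Y ∧ Z ≠ Yᶜ) :
    ∃ w : ι → ℚ, ∑ i, w i = 0 ∧ ∑ i ∈ Y, w i = 0 ∧ ∀ Z ∈ B, ∑ i ∈ Z, w i ≠ 0 := by
  induction B using Finset.induction_on with
  | empty => exact ⟨fun _ => 0, by simp, by simp, by simp⟩
  | @insert Z B hZB ih =>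
    obtain ⟨w, hw1, hw2, hw3⟩ := ih (fun Z' hZ' => hB Z' (Finset.mem_insert_of_mem hZ'))
    obtain ⟨hZe, hZu, hZY, hZYc⟩ := hB Z (Finset.mem_insert_self Z B)
    obtain ⟨u, hu1, hu2, hu3⟩ := aux_exists_dir Y Z hZe hZu hZY hZYc
    obtain ⟨t, ht⟩ := Infinite.exists_notMem_finset
      ((insert Z B).image (fun Z' => -(∑ i ∈ Z', w i) / (∑ i ∈ Z', u i)))
    refine ⟨fun i => w i + t * u i, ?_, ?_, ?_⟩
    · simp [Finset.sum_add_distrib, ← Finset.mul_sum, hw1, hu1]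
    · simp [Finset.sum_add_distrib, ← Finset.mul_sum, hw2, hu2]
    · intro Z' hZ'
      simp only [Finset.sum_add_distrib, ← Finset.mul_sum]
      by_cases hSu : ∑ i ∈ Z', u i = 0
      · have hZ'B : Z' ∈ B := by
          rcases Finset.mem_insert.1 hZ' with h | h
          · exact absurd (h ▸ hSu) hu3
          · exact h
        simpa [hSu] using hw3 Z' hZ'B
      · intro hcon
        apply ht
        refine Finset.mem_image.2 ⟨Z', hZ', ?_⟩
        field_simp
        linarith

private lemma aux_bcon_compl {conn : Finset ι → Prop} {Y : Finset ι} (h : BCon conn Y) :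
    BCon conn Yᶜ := ⟨h.2.1, by rw [compl_compl]; exact h.1, h.2.2.2, by rw [compl_compl]; exact h.2.2.1⟩

private lemma aux_degset_empty (conn : Finset ι → Prop) : IsDegSet conn (∅ : Set (Finset ι)) :=
  ⟨fun _ h => h.elim, fun _ h => h.elim, fun _ h => h.elim⟩

private lemma aux_max_empty (conn : Finset ι → Prop) : IsMaxDeg conn (∅ : Set (Finset ι)) :=
  ⟨aux_degset_empty conn, fun D' _ hGE => Set.subset_empty_iff.1 hGE.1⟩

private lemma aux_degGE_empty {conn : Finset ι → Prop} {D : Set (Finset ι)}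
    (hD : IsDegSet conn D) (i₀ : ι) : DegGE conn ∅ D := by
  refine ⟨Set.empty_subset D, {Z | Z ∈ D ∧ i₀ ∉ Z}, ?_, ?_, ?_, ?_⟩
  · intro Z hZ
    rw [Set.diff_empty]
    exact hZ.1
  · intro Z hZ
    rw [Set.diff_empty] at hZ
    have hZc : Zᶜ ∈ D := hD.2.1 Z hZ
    simp only [Set.mem_setOf_eq, hZ, hZc, true_and, Finset.mem_compl, not_not]
  · intro Z₁ h₁ Z₂ h₂ _ hU
    exact absurd hU (Set.notMem_empty _)
  · intro Z₁ h₁ Z₂ h₂ Z₃ h₃ h12 h13 h23 hU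
    rw [Set.diff_empty] at h₁ h₂ h₃
    have hi : i₀ ∈ Z₁ ∪ Z₂ ∪ Z₃ := hU ▸ Finset.mem_univ i₀
    simp only [Finset.mem_union] at hi
    simp only [Set.mem_setOf_eq, h₁, h₂, h₃, true_and]
    rcases hi with (h | h) | h
    · refine ⟨Or.inr (Or.inl (Finset.disjoint_left.1 h12 h)), fun hc => hc.1 h⟩
    · refine ⟨Or.inl (Finset.disjoint_right.1 h12 h), fun hc => hc.2.1 h⟩
    · refine ⟨Or.inl (Finset.disjoint_right.1 h13 h), fun hc => hc.2.2 h⟩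

private lemma aux_max_imp_empty {conn : Finset ι → Prop} {D : Set (Finset ι)}
    (h : IsMaxDeg conn D) : D = ∅ := by
  by_cases hne : D = ∅
  · exact hne
  · obtain ⟨Y, hY⟩ := Set.nonempty_iff_ne_empty.2 hne
    obtain ⟨i₀, _⟩ := (h.1.1 Y hY).1
    exact (h.2 ∅ (aux_degset_empty conn) (aux_degGE_empty h.1 i₀)).symm

private lemma aux_degset_pair {conn : Finset ι → Prop} {Y : Finset ι} (hY : BCon conn Y) :
    IsDegSet conn ({Y, Yᶜ} : Set (Finset ι)) := by
  have hYc : BCon conn Yᶜ :=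
    ⟨hY.2.1, by rw [compl_compl]; exact hY.1, hY.2.2.2, by rw [compl_compl]; exact hY.2.2.1⟩
  refine ⟨?_, ?_, ?_⟩
  · rintro Z (rfl | rfl)
    exacts [hY, hYc]
  · rintro Z (rfl | rfl)
    · exact Or.inr rfl
    · left; rw [compl_compl]
  · rintro Z₁ (rfl | rfl) Z₂ (rfl | rfl) hdis hB
    · exact absurd ((Finset.disjoint_self_iff_empty _).1 hdis) hY.1.ne_empty
    · rw [Finset.union_compl] at hB
      exact absurd hB.2.1 (by simp)
    · rw [Finset.union_comm, Finset.union_compl] at hB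
      exact absurd hB.2.1 (by simp)
    · exact absurd ((Finset.disjoint_self_iff_empty _).1 hdis) hYc.1.ne_empty

private lemma aux_degGE_pair {conn : Finset ι → Prop} {D : Set (Finset ι)}
    (hD : IsDegSet conn D) {Y : Finset ι} (hY : Y ∈ D) :
    DegGE conn ({Y, Yᶜ} : Set (Finset ι)) D := by
  classical
  set P : Set (Finset ι) := {Y, Yᶜ} with hP
  have hsub : P ⊆ D := by
    rintro Z (rfl | rfl)
    exacts [hY, hD.2.1 Y hY]
  have hfour : ∀ Z ∈ D \ P, Z ≠ ∅ ∧ Z ≠ univ ∧ Z ≠ Y ∧ Z ≠ Yᶜ := by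
    rintro Z ⟨hZD, hZP⟩
    obtain ⟨hne, hcne, -, -⟩ := hD.1 Z hZD
    refine ⟨hne.ne_empty, ?_, fun h => hZP (Or.inl h), fun h => hZP (Or.inr h)⟩
    rintro rfl
    simp at hcne
  obtain ⟨w, hw1, hw2, hw3⟩ := aux_exists_w Y (Set.toFinite (D \ P)).toFinset
    (fun Z hZ => hfour Z ((Set.Finite.mem_toFinset _).1 hZ))
  set g : Finset ι → ℚ := fun Z => ∑ i ∈ Z, w i with hg
  have hgne : ∀ Z ∈ D \ P, g Z ≠ 0 := fun Z hZ => hw3 Z ((Set.Finite.mem_toFinset _).2 hZ)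
  have hgcompl : ∀ Z : Finset ι, g Zᶜ = -g Z := by
    intro Z
    have := Finset.sum_add_sum_compl Z w
    rw [hw1] at this
    simp only [hg]
    linarith
  have hcmem : ∀ Z ∈ D \ P, Zᶜ ∈ D \ P := by
    rintro Z ⟨hZD, hZP⟩
    refine ⟨hD.2.1 Z hZD, ?_⟩
    rintro (h | h)
    · exact hZP (Or.inr (Set.mem_singleton_iff.2 (by rw [← h, compl_compl])))
    · exact hZP (Or.inl (by rw [← compl_compl Z, h, compl_compl]))
  refine ⟨hsub, {Z | Z ∈ D \ P ∧ 0 < g Z}, fun Z hZ => hZ.1, ?_, ?_, ?_⟩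
  · intro Z hZ
    have h1 := hgne Z hZ
    have h2 := hcmem Z hZ
    simp only [Set.mem_setOf_eq, hZ, h2, true_and, hgcompl]
    constructor
    · intro h hc; linarith
    · intro h
      rcases h1.lt_or_gt with h' | h'
      · exact absurd (by linarith : (0:ℚ) < -g Z) h
      · exact h'
  · intro Z₁ h₁ Z₂ h₂ hdis hU
    have hsum : g Z₁ + g Z₂ = 0 := by
      have : g (Z₁ ∪ Z₂) = g Z₁ + g Z₂ := Finset.sum_union hdis
      rcases hU with h | h
      · rw [h] at this; rw [← this, hg]; exact hw2
      · rw [h] at this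
        rw [← this, hgcompl, hg]
        simp only
        rw [hw2, neg_zero]
    have h1 := hgne Z₁ h₁
    simp only [Set.mem_setOf_eq, h₁, h₂, true_and]
    constructor
    · intro h hc; linarith
    · intro h
      rcases h1.lt_or_gt with h' | h'
      · exact absurd (by linarith : (0:ℚ) < g Z₂) h
      · exact h'
  · intro Z₁ h₁ Z₂ h₂ Z₃ h₃ h12 h13 h23 hU
    have hsum : g Z₁ + g Z₂ + g Z₃ = 0 := by
      have e1 : g (Z₁ ∪ Z₂) = g Z₁ + g Z₂ := Finset.sum_union h12
      have e2 : g (Z₁ ∪ Z₂ ∪ Z₃) = g (Z₁ ∪ Z₂) + g Z₃ :=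
        Finset.sum_union (Finset.disjoint_union_left.2 ⟨h13, h23⟩)
      rw [hU] at e2
      have : g univ = 0 := hw1
      rw [this] at e2
      linarith
    have hg1 := hgne Z₁ h₁
    have hg2 := hgne Z₂ h₂
    have hg3 := hgne Z₃ h₃
    simp only [Set.mem_setOf_eq, h₁, h₂, h₃, true_and]
    constructor
    · by_contra hc
      push_neg at hc
      have l1 : g Z₁ < 0 := lt_of_le_of_ne hc.1 hg1
      have l2 : g Z₂ < 0 := lt_of_le_of_ne hc.2.1 hg2
      have l3 : g Z₃ < 0 := lt_of_le_of_ne hc.2.2 hg3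
      linarith
    · rintro ⟨p1, p2, p3⟩
      linarith

/-- A degeneracy subset is maximal iff it is empty, and submaximal (not maximal and
dominated only by maximal elements) iff it equals `{Y, Yᶜ}` for some biconnected `Y`. -/
theorem stmt_16 (conn : Finset ι → Prop) (D : Set (Finset ι)) (hD : IsDegSet conn D) :
    (IsMaxDeg conn D ↔ D = ∅) ∧
    ((¬ IsMaxDeg conn D ∧
        ∀ D' : Set (Finset ι), IsDegSet conn D' → DegGE conn D' D → D' ≠ D →
          IsMaxDeg conn D') ↔
      ∃ Y : Finset ι, BCon conn Y ∧ D = {Y, Yᶜ}) := by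
  constructor
  · constructor
    · exact fun h => aux_max_imp_empty h
    · rintro rfl
      exact aux_max_empty conn
  · constructor
    · rintro ⟨hnmax, hsub⟩
      have hDne : D ≠ ∅ := by
        rintro rfl
        exact hnmax (aux_max_empty conn)
      obtain ⟨Y, hY⟩ := Set.nonempty_iff_ne_empty.2 hDne
      refine ⟨Y, hD.1 Y hY, ?_⟩
      have hPD : ({Y, Yᶜ} : Set (Finset ι)) ⊆ D := by
        rintro Z (rfl | rfl)
        exacts [hY, hD.2.1 Y hY]
      refine Set.Subset.antisymm ?_ hPD
      intro Z hZ
      by_contra hZP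
      have hne' : ({Y, Yᶜ} : Set (Finset ι)) ≠ D := fun h => hZP (h.symm ▸ hZ)
      have hmax' := hsub _ (aux_degset_pair (hD.1 Y hY)) (aux_degGE_pair hD hY) hne'
      have hemp := aux_max_imp_empty hmax'
      exact absurd (hemp ▸ (Or.inl rfl : Y ∈ ({Y, Yᶜ} : Set (Finset ι))))
        (Set.notMem_empty Y)
    · rintro ⟨Y, hYB, rfl⟩
      have hYD : Y ∈ ({Y, Yᶜ} : Set (Finset ι)) := Or.inl rfl
      constructor
      · intro hmax
        have hemp := aux_max_imp_empty hmax
        exact absurd (hemp ▸ hYD) (Set.notMem_empty Y)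
      · intro D' hD' hGE hne'
        have hsub' : D' ⊆ {Y, Yᶜ} := hGE.1
        have key : Y ∈ D' → False := by
          intro hYD'
          have hYcD' : Yᶜ ∈ D' := hD'.2.1 Y hYD'
          apply hne'
          refine Set.Subset.antisymm hsub' ?_
          rintro Z (rfl | rfl)
          exacts [hYD', hYcD']
        have hD'empty : D' = ∅ := by
          rw [Set.eq_empty_iff_forall_notMem]
          intro Z hZ
          have hmem := hsub' hZ
          simp only [Set.mem_insert_iff, Set.mem_singleton_iff] at hmem
          rcases hmem with rfl | rfl
          · exact key hZ
          · refine key ?_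
            have := hD'.2.1 _ hZ
            rwa [compl_compl] at this
        rw [hD'empty]
        exact aux_max_empty conn
end
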